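/- arXiv:2308.08189 — 6 statements merged into one kernel-verified Lean document; each statement's English description precedes it below -/
import Mathlib

section
/- Let n, m ∈ ℕ with 1 ≤ m + 1 ≤ n. Set δ_y = ⌊(n+1)/(m+1)⌋, δ_z = ⌊(n+1)/(m+2)⌋, n_y = (m+1)(1+δ_y) − n − 1 and n_z = (m+2)(1+δ_z) − n − 1. Define Δ_{y,i} = δ_y for 1 ≤ i ≤ n_y and Δ_{y,i} = δ_y + 1 for n_y + 1 ≤ i ≤ m+1, and define Δ_{z,i} = δ_z for 1 ≤ i ≤ n_z and Δ_{z,i} = δ_z + 1 for n_z + 1 ≤ i ≤ m+2. Then for every l with 1 ≤ l ≤ m+1: Σ_{k=1}^{l} Δ_{z,k} ≤ Σ_{k=1}^{l} Δ_{y,k} ≤ Σ_{k=1}^{l+1} Δ_{z,k}. -/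
/-!
With `q = N / p`, the first `l` of the `p` balanced gaps summing to `N` add up to
`max (l * q) (N - (p - l) * (q + 1))`: either all of them are small, or all the remaining ones
are large. Passing from `p` to `p + 1` parts lowers `q` to `q' ≤ q`, and both interlacing
inequalities compare these maxima termwise, splitting on whether `q' = q` or `q' < q`.
-/

open Finset

def balancedPartialSum (N p l : ℕ) : ℕ := max (l * (N / p)) (N - (p - l) * (N / p + 1))

lemma sum_Icc_ite_le (c q l : ℕ) :
    ∑ k ∈ Icc 1 l, (if k ≤ c then q else q + 1) = l * q + (l - min l c) := by
  induction l with
  | zero => simp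
  | succ l ih =>
    rw [sum_Icc_succ_top (Nat.le_add_left 1 l), ih, Nat.succ_mul]
    split_ifs <;> omega

lemma sum_Icc_eq_balancedPartialSum {N p l : ℕ} {Δ : ℕ → ℕ} (hp : 0 < p) (hl : l ≤ p)
    (hΔ : ∀ i, 1 ≤ i → i ≤ p → Δ i = if i ≤ p * (1 + N / p) - N then N / p else N / p + 1) :
    ∑ k ∈ Icc 1 l, Δ k = balancedPartialSum N p l := by
  rw [sum_congr rfl fun k hk => hΔ k (mem_Icc.1 hk).1 ((mem_Icc.1 hk).2.trans hl),
    sum_Icc_ite_le, balancedPartialSum]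
  set q := N / p
  have hN : p * q + N % p = N := Nat.div_add_mod N p
  have hr : N % p < p := Nat.mod_lt N hp
  have hpq : p * q = l * q + (p - l) * q := by
    rw [← Nat.add_mul, Nat.add_sub_cancel' hl, Nat.mul_comm]
  have hsucc : (p - l) * (q + 1) = (p - l) * q + (p - l) := Nat.mul_succ _ _
  have hp1 : p * (1 + q) = p + p * q := by rw [Nat.mul_add, Nat.mul_one]
  omega

section

variable {N p l : ℕ}

lemma balancedPartialSum_succ_le (hp : 0 < p) (hl : l ≤ p) :
    balancedPartialSum N (p + 1) l ≤ balancedPartialSum N p l := by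
  unfold balancedPartialSum
  set q := N / p
  set q' := N / (p + 1)
  have hq : q' ≤ q := Nat.div_le_div_left (Nat.le_succ p) hp
  refine max_le (le_max_of_le_left (Nat.mul_le_mul_left l hq)) ?_
  rcases hq.lt_or_eq with hlt | heq
  · -- since `N < (p + 1) * (q' + 1)`, at most `l * (q' + 1) ≤ l * q` is left for the first `l` gaps
    have hN : N < (p + 1) * (q' + 1) := Nat.lt_mul_div_succ N (Nat.succ_pos p)
    have hsplit : (p + 1) * (q' + 1) = l * (q' + 1) + (p + 1 - l) * (q' + 1) := by
      rw [← Nat.add_mul, Nat.add_sub_cancel' (by omega)]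
    have hl' : l * (q' + 1) ≤ l * q := Nat.mul_le_mul_left l hlt
    exact le_max_of_le_left (by omega)
  · rw [heq]
    exact le_max_of_le_right (Nat.sub_le_sub_left (Nat.mul_le_mul_right _ (by omega)) N)

lemma balancedPartialSum_le_succ_succ (hp : 0 < p) (hl : l ≤ p) :
    balancedPartialSum N p l ≤ balancedPartialSum N (p + 1) (l + 1) := by
  unfold balancedPartialSum
  rw [Nat.add_sub_add_right]
  set q := N / p
  set q' := N / (p + 1)
  have hq : q' ≤ q := Nat.div_le_div_left (Nat.le_succ p) hp
  refine max_le ?_ (le_max_of_le_right (Nat.sub_le_sub_left (Nat.mul_le_mul_left _ (by omega)) N))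
  rcases hq.lt_or_eq with hlt | heq
  · -- `p * q ≤ N`, and each of the last `p - l` of the `p` gaps `q` is at least `q' + 1`
    have hN : p * q ≤ N := Nat.mul_div_le N p
    have hsplit : p * q = l * q + (p - l) * q := by
      rw [← Nat.add_mul, Nat.add_sub_cancel' hl]
    have hlarge : (p - l) * (q' + 1) ≤ (p - l) * q := Nat.mul_le_mul_left _ hlt
    exact le_max_of_le_right (by omega)
  · rw [heq]
    exact le_max_of_le_left (Nat.mul_le_mul_right _ (Nat.le_succ l))

end

theorem statement1_general (n m : ℕ)
    (δy δz ny nz : ℕ)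
    (hδy : δy = (n + 1) / (m + 1)) (hδz : δz = (n + 1) / (m + 2))
    (hny : ny = (m + 1) * (1 + δy) - (n + 1))
    (hnz : nz = (m + 2) * (1 + δz) - (n + 1))
    (Δy Δz : ℕ → ℕ)
    (hΔy : ∀ i, 1 ≤ i → i ≤ m + 1 → Δy i = if i ≤ ny then δy else δy + 1)
    (hΔz : ∀ i, 1 ≤ i → i ≤ m + 2 → Δz i = if i ≤ nz then δz else δz + 1)
    (l : ℕ) (hl2 : l ≤ m + 1) :
    (∑ k ∈ Finset.Icc 1 l, Δz k ≤ ∑ k ∈ Finset.Icc 1 l, Δy k) ∧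
    (∑ k ∈ Finset.Icc 1 l, Δy k ≤ ∑ k ∈ Finset.Icc 1 (l + 1), Δz k) := by
  subst hny hnz hδy hδz
  have hp : 0 < m + 1 := Nat.succ_pos m
  rw [sum_Icc_eq_balancedPartialSum hp hl2 hΔy,
    sum_Icc_eq_balancedPartialSum (p := m + 1 + 1) (Nat.succ_pos _) (by omega) hΔz,
    sum_Icc_eq_balancedPartialSum (p := m + 1 + 1) (Nat.succ_pos _) (by omega) hΔz]
  exact ⟨balancedPartialSum_succ_le hp hl2, balancedPartialSum_le_succ_succ hp hl2⟩

/-- Interlacing (alternating) property of the canonical balanced gap sequences with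
`m+1` and `m+2` parts summing to `n+1`, listing the smaller gaps first. -/
theorem statement1 (n m : ℕ) (hmn : m + 1 ≤ n)
    (δy δz ny nz : ℕ)
    (hδy : δy = (n + 1) / (m + 1)) (hδz : δz = (n + 1) / (m + 2))
    (hny : ny = (m + 1) * (1 + δy) - (n + 1))
    (hnz : nz = (m + 2) * (1 + δz) - (n + 1))
    (Δy Δz : ℕ → ℕ)
    (hΔy : ∀ i, 1 ≤ i → i ≤ m + 1 → Δy i = if i ≤ ny then δy else δy + 1)
    (hΔz : ∀ i, 1 ≤ i → i ≤ m + 2 → Δz i = if i ≤ nz then δz else δz + 1)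
    (l : ℕ) (hl1 : 1 ≤ l) (hl2 : l ≤ m + 1) :
    (∑ k ∈ Finset.Icc 1 l, Δz k ≤ ∑ k ∈ Finset.Icc 1 l, Δy k) ∧
    (∑ k ∈ Finset.Icc 1 l, Δy k ≤ ∑ k ∈ Finset.Icc 1 (l + 1), Δz k) :=
  statement1_general n m δy δz ny nz hδy hδz hny hnz Δy Δz hΔy hΔz l hl2
end

section
/- Let n ≥ 1, x > 0 and let m be an integer with 0 ≤ m < n. Let v* ∈ ℝⁿ be any equidistant vector for mass mx. Then v* minimizes f over Λ(mx): for every u ∈ Λ(mx), f(v*) ≤ f(u). -/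
open Finset

/-- `f v = Σ_{1 ≤ l ≤ k ≤ n} (x − Σ_{i=l}^{k} v_i)⁺` (0-indexed over `Fin n`). -/
noncomputable def f (n : ℕ) (x : ℝ) (v : Fin n → ℝ) : ℝ :=
  ∑ l : Fin n, ∑ k : Fin n,
    if l ≤ k then max (x - ∑ i ∈ Finset.Icc l k, v i) 0 else 0

/-- `Λ(w)`: nonnegative vectors with coordinate sum `w`. -/
def Lambda (n : ℕ) (w : ℝ) : Set (Fin n → ℝ) :=
  {v | (∀ i, 0 ≤ v i) ∧ ∑ i, v i = w}

/-- An equidistant vector for mass `m·x`: determined by positive integers `Δ_1,…,Δ_{m+1}`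
with `Σ Δ_k = n+1` and `|Δ_{k₁} − Δ_{k₂}| ≤ 1`, with `v_i = x` exactly when the 1-based
index `i` is one of the partial sums `Σ_{k=1}^{j} Δ_k`, `1 ≤ j ≤ m`. -/
def IsEquidistant (n m : ℕ) (x : ℝ) (v : Fin n → ℝ) : Prop :=
  ∃ Δ : ℕ → ℕ,
    (∀ k ∈ Finset.Icc 1 (m + 1), 0 < Δ k) ∧
    (∑ k ∈ Finset.Icc 1 (m + 1), Δ k = n + 1) ∧
    (∀ k₁ ∈ Finset.Icc 1 (m + 1), ∀ k₂ ∈ Finset.Icc 1 (m + 1), Δ k₁ ≤ Δ k₂ + 1) ∧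
    (∀ i : Fin n,
      ((∃ j, 1 ≤ j ∧ j ≤ m ∧ (i : ℕ) + 1 = ∑ k ∈ Finset.Icc 1 j, Δ k) → v i = x) ∧
      (¬ (∃ j, 1 ≤ j ∧ j ≤ m ∧ (i : ℕ) + 1 = ∑ k ∈ Finset.Icc 1 j, Δ k) → v i = 0))


/-! Write `S a = v₀ + ⋯ + v_{a-1}` for the prefix sums, so that `f v` regroups by window length
`ℓ + 1` into sums `Σ_a (x - (S (a + ℓ + 1) - S a))⁺`. Let `q` be the smallest gap `Δ_k`. For the
equidistant vector a window of length at most `q` contains at most one `x`, so its terms equal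
`x` minus the window sum, while a longer window contains at least one `x`, so its terms vanish.
For length `ℓ + 1 ≤ q` the window sums telescope to `Σ_{t ≤ ℓ} (S (t + n - ℓ) - S t)`, which is
at most `(ℓ + 1) m x` for every `u ∈ Λ(m x)` and equal to it for `v*`, whose first and last
`q - 1` coordinates vanish. -/

theorem sum_range_sub_shift {G : Type*} [AddCommGroup G] (S : ℕ → G) (N k : ℕ) :
    ∑ a ∈ range N, (S (a + k) - S a) = ∑ t ∈ range k, (S (t + N) - S t) := by
  have telescope : ∀ b c, S (b + c) - S b = ∑ t ∈ range c, (S (b + t + 1) - S (b + t)) := by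
    intro b c
    simpa [add_assoc] using (sum_range_sub (fun t => S (b + t)) c).symm
  calc ∑ a ∈ range N, (S (a + k) - S a)
      = ∑ a ∈ range N, ∑ t ∈ range k, (S (a + t + 1) - S (a + t)) :=
        sum_congr rfl fun a _ => telescope a k
    _ = ∑ t ∈ range k, ∑ a ∈ range N, (S (t + a + 1) - S (t + a)) := by
        rw [sum_comm]; simp only [add_comm]
    _ = ∑ t ∈ range k, (S (t + N) - S t) := sum_congr rfl fun t _ => (telescope t N).symm

noncomputable def windowCost (n : ℕ) (x : ℝ) (S : ℕ → ℝ) : ℝ :=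
  ∑ ℓ ∈ range n, ∑ a ∈ range (n - ℓ), max (x - (S (a + ℓ + 1) - S a)) 0

section WindowCost

variable {n q : ℕ} {x M : ℝ} {S T : ℕ → ℝ}

theorem sum_window_le_sum_window_of_short (hS_low : ∀ a < q, S a = 0)
    (hS_high : ∀ a, n + 1 - q ≤ a → S a = M) (hS_short : ∀ a ℓ, ℓ < q → S (a + ℓ + 1) - S a ≤ x)
    (hT : ∀ a, T a ∈ Set.Icc 0 M) {ℓ : ℕ} (hℓq : ℓ < q) (hℓn : ℓ < n) :
    ∑ a ∈ range (n - ℓ), max (x - (S (a + ℓ + 1) - S a)) 0 ≤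
      ∑ a ∈ range (n - ℓ), max (x - (T (a + ℓ + 1) - T a)) 0 := by
  have increments_le : ∑ a ∈ range (n - ℓ), (T (a + ℓ + 1) - T a) ≤
      ∑ a ∈ range (n - ℓ), (S (a + ℓ + 1) - S a) := by
    simp only [add_assoc]
    rw [sum_range_sub_shift T, sum_range_sub_shift S]
    refine sum_le_sum fun t ht => ?_
    rw [mem_range] at ht
    rw [hS_low t (by omega), hS_high _ (by omega)]
    linarith [(hT t).1, (hT (t + (n - ℓ))).2]
  calc ∑ a ∈ range (n - ℓ), max (x - (S (a + ℓ + 1) - S a)) 0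
      = ∑ a ∈ range (n - ℓ), (x - (S (a + ℓ + 1) - S a)) :=
        sum_congr rfl fun a _ => max_eq_left (sub_nonneg.2 (hS_short a ℓ hℓq))
    _ ≤ ∑ a ∈ range (n - ℓ), (x - (T (a + ℓ + 1) - T a)) := by
        rw [sum_sub_distrib (fun _ => x), sum_sub_distrib (fun _ => x)]
        linarith
    _ ≤ ∑ a ∈ range (n - ℓ), max (x - (T (a + ℓ + 1) - T a)) 0 :=
        sum_le_sum fun a _ => le_max_left _ _

theorem windowCost_le_windowCost (hS_low : ∀ a < q, S a = 0)
    (hS_high : ∀ a, n + 1 - q ≤ a → S a = M) (hS_short : ∀ a ℓ, ℓ < q → S (a + ℓ + 1) - S a ≤ x)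
    (hS_long : ∀ a ℓ, q ≤ ℓ → a + ℓ + 1 ≤ n → x ≤ S (a + ℓ + 1) - S a)
    (hT : ∀ a, T a ∈ Set.Icc 0 M) : windowCost n x S ≤ windowCost n x T := by
  refine sum_le_sum fun ℓ hℓ => ?_
  rw [mem_range] at hℓ
  rcases lt_or_ge ℓ q with hℓq | hℓq
  · exact sum_window_le_sum_window_of_short hS_low hS_high hS_short hT hℓq hℓ
  · calc ∑ a ∈ range (n - ℓ), max (x - (S (a + ℓ + 1) - S a)) 0 = 0 :=
          sum_eq_zero fun a ha => max_eq_right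
            (sub_nonpos.2 (hS_long a ℓ hℓq (by rw [mem_range] at ha; omega)))
      _ ≤ _ := sum_nonneg fun a _ => le_max_right _ _

end WindowCost

def prefixSum {M : Type*} [AddCommMonoid M] {n : ℕ} (v : Fin n → M) (a : ℕ) : M :=
  ∑ i : Fin n, if (i : ℕ) < a then v i else 0

theorem sum_Icc_eq_prefixSum_sub {G : Type*} [AddCommGroup G] {n : ℕ} (v : Fin n → G)
    {l k : Fin n} (hlk : l ≤ k) : ∑ i ∈ Icc l k, v i = prefixSum v (k + 1) - prefixSum v l := by
  have hIcc : Icc l k = univ.filter (fun i => l ≤ i ∧ i ≤ k) := by ext; simp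
  rw [hIcc, sum_filter, eq_sub_iff_add_eq, prefixSum, prefixSum, ← sum_add_distrib]
  refine sum_congr rfl fun i _ => ?_
  rw [Fin.le_def] at hlk
  simp only [Fin.le_def]
  split_ifs <;> first | (exfalso; omega) | simp

theorem f_eq_windowCost (n : ℕ) (x : ℝ) (v : Fin n → ℝ) :
    f n x v = windowCost n x (prefixSum v) := by
  set g : ℕ → ℕ → ℝ := fun a b => max (x - (prefixSum v b - prefixSum v a)) 0
  have pairs : f n x v = ∑ l ∈ range n, ∑ k ∈ range n, if l ≤ k then g l (k + 1) else 0 := by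
    rw [f, ← Fin.sum_univ_eq_sum_range]
    refine sum_congr rfl fun l _ => ?_
    rw [← Fin.sum_univ_eq_sum_range (fun k => if (l : ℕ) ≤ k then g l (k + 1) else 0)]
    refine sum_congr rfl fun k _ => ?_
    by_cases hlk : l ≤ k
    · rw [if_pos hlk, if_pos (Fin.le_def.1 hlk), sum_Icc_eq_prefixSum_sub v hlk]
    · rw [if_neg hlk, if_neg (mt Fin.le_def.2 hlk)]
  have inner : ∀ l, (∑ k ∈ range n, if l ≤ k then g l (k + 1) else 0) =
      ∑ ℓ ∈ range (n - l), g l (l + ℓ + 1) := by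
    intro l
    rw [← sum_filter, ← sum_Ico_eq_sum_range (fun k => g l (k + 1))]
    congr 1
    ext k
    simp only [mem_filter, mem_range, mem_Ico]
    omega
  rw [pairs, windowCost]
  simp only [inner]
  refine sum_comm' fun l ℓ => ?_
  simp only [mem_range]
  omega

theorem prefixSum_mem_Icc_of_mem_Lambda {n : ℕ} {M : ℝ} {u : Fin n → ℝ} (hu : u ∈ Lambda n M)
    (a : ℕ) : prefixSum u a ∈ Set.Icc 0 M := by
  obtain ⟨hu_nonneg, hu_sum⟩ := hu
  refine ⟨sum_nonneg fun i _ => ?_, hu_sum ▸ sum_le_sum fun i _ => ?_⟩ <;>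
    split_ifs <;> simp [hu_nonneg i]

def markCount (T : Finset ℕ) (a : ℕ) : ℕ := #{p ∈ T | p ≤ a}

section MarkCount

variable {T : Finset ℕ} {n q a : ℕ}

theorem markCount_add_card_between {b : ℕ} (hab : a ≤ b) :
    markCount T b = markCount T a + #{p ∈ T | a < p ∧ p ≤ b} := by
  rw [markCount, markCount, ← card_union_of_disjoint, ← filter_or]
  · congr 1; ext p
    simp only [mem_filter, and_congr_right_iff]
    omega
  · exact disjoint_filter.2 fun p _ h₁ h₂ => by omega

theorem markCount_eq_zero (hT_low : ∀ p ∈ T, q ≤ p) (ha : a < q) : markCount T a = 0 := by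
  rw [markCount, card_eq_zero, filter_eq_empty_iff]
  exact fun p hp => by have := hT_low p hp; omega

theorem markCount_eq_card (hT_high : ∀ p ∈ T, p + q ≤ n + 1) (ha : n + 1 - q ≤ a) :
    markCount T a = #T := by
  rw [markCount, filter_true_of_mem]
  exact fun p hp => by have := hT_high p hp; omega

theorem markCount_add_le (hT_sep : ∀ p₁ ∈ T, ∀ p₂ ∈ T, p₁ < p₂ → p₁ + q ≤ p₂) {s : ℕ}
    (hs : s ≤ q) : markCount T (a + s) ≤ markCount T a + 1 := by
  rw [markCount_add_card_between (Nat.le_add_right a s), add_le_add_iff_left, card_le_one]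
  intro p₁ hp₁ p₂ hp₂
  simp only [mem_filter] at hp₁ hp₂
  by_contra hne
  rcases Nat.lt_or_gt_of_ne hne with h | h
  · have := hT_sep p₁ hp₁.1 p₂ hp₂.1 h; omega
  · have := hT_sep p₂ hp₂.1 p₁ hp₁.1 h; omega

theorem markCount_lt_of_exists {b : ℕ} (hab : a ≤ b) (hT_cover : ∃ p ∈ T, a < p ∧ p ≤ b) :
    markCount T a < markCount T b := by
  obtain ⟨p, hp, hap, hpb⟩ := hT_cover
  rw [markCount_add_card_between hab, Nat.lt_add_right_iff_pos, card_pos]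
  exact ⟨p, mem_filter.2 ⟨hp, hap, hpb⟩⟩

theorem prefixSum_eq_markCount_smul {M : Type*} [AddCommMonoid M] {v : Fin n → M} {x : M}
    (hT : ∀ p ∈ T, 1 ≤ p ∧ p ≤ n) (hv : ∀ i, v i = if (i : ℕ) + 1 ∈ T then x else 0) (a : ℕ) :
    prefixSum v a = markCount T a • x := by
  have hsum : prefixSum v a =
      ∑ i ∈ univ.filter (fun i : Fin n => (i : ℕ) < a ∧ (i : ℕ) + 1 ∈ T), x := by
    rw [sum_filter, prefixSum]
    refine sum_congr rfl fun i _ => ?_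
    rw [hv, ite_and]
  rw [hsum, sum_const, markCount]
  congr 1
  refine card_nbij (fun i => (i : ℕ) + 1) (fun i hi => ?_) (fun i _ j _ h => ?_) (fun p hp => ?_)
  · simp only [coe_filter, mem_univ, true_and, Set.mem_ofPred_eq] at hi ⊢
    exact ⟨hi.2, by omega⟩
  · exact Fin.ext (by simpa using h)
  · simp only [coe_filter, Set.mem_ofPred_eq] at hp
    have hp_pos := (hT p hp.1).1
    have hp_le := (hT p hp.1).2
    refine ⟨⟨p - 1, by omega⟩, ?_, by simp only; omega⟩
    simp only [coe_filter, mem_univ, true_and, Set.mem_ofPred_eq, Nat.sub_add_cancel hp_pos]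
    exact ⟨by omega, hp.1⟩

end MarkCount

theorem f_le_f_of_marks {n q : ℕ} {x : ℝ} {T : Finset ℕ} {v u : Fin n → ℝ} (hx : 0 ≤ x)
    (hq : 0 < q) (hT_low : ∀ p ∈ T, q ≤ p) (hT_high : ∀ p ∈ T, p + q ≤ n + 1)
    (hT_sep : ∀ p₁ ∈ T, ∀ p₂ ∈ T, p₁ < p₂ → p₁ + q ≤ p₂)
    (hT_cover : ∀ a b, a + q < b → b ≤ n → ∃ p ∈ T, a < p ∧ p ≤ b)
    (hv : ∀ i, v i = if (i : ℕ) + 1 ∈ T then x else 0) (hu : u ∈ Lambda n (#T * x)) :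
    f n x v ≤ f n x u := by
  have hS : ∀ a, prefixSum v a = markCount T a * x := fun a => by
    rw [prefixSum_eq_markCount_smul (fun p hp => ⟨(hq.trans_le (hT_low p hp)), by
      have := hT_high p hp; omega⟩) hv, nsmul_eq_mul]
  rw [f_eq_windowCost, f_eq_windowCost]
  refine windowCost_le_windowCost (q := q) ?_ ?_ ?_ ?_ (prefixSum_mem_Icc_of_mem_Lambda hu)
  · intro a ha
    rw [hS, markCount_eq_zero hT_low ha, Nat.cast_zero, zero_mul]
  · intro a ha
    rw [hS, markCount_eq_card hT_high ha]
  · intro a ℓ hℓ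
    have hcount : (markCount T (a + ℓ + 1) : ℝ) ≤ markCount T a + 1 := by
      exact_mod_cast markCount_add_le hT_sep (a := a) (s := ℓ + 1) hℓ
    rw [hS, hS, ← sub_mul]
    nlinarith
  · intro a ℓ hℓ han
    have hcount : (markCount T a : ℝ) + 1 ≤ markCount T (a + ℓ + 1) := by
      exact_mod_cast markCount_lt_of_exists (by omega) (hT_cover a (a + ℓ + 1) (by omega) han)
    rw [hS, hS, ← sub_mul]
    nlinarith

def marks (P : ℕ → ℕ) (m : ℕ) : Finset ℕ := (Icc 1 m).image P

section Marks

variable {n m q : ℕ} {P : ℕ → ℕ}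

theorem add_le_of_lt_of_step (hstep : ∀ j ≤ m, P j + q ≤ P (j + 1)) {j₁ j₂ : ℕ} (h₁₂ : j₁ < j₂)
    (h₂ : j₂ ≤ m + 1) : P j₁ + q ≤ P j₂ := by
  induction j₂, h₁₂ using Nat.le_induction with
  | base => exact hstep j₁ (by omega)
  | succ j hj ih =>
    have := hstep j (by omega)
    have := ih (by omega)
    omega

theorem le_of_mem_marks (hP0 : P 0 = 0) (hstep : ∀ j ≤ m, P j + q ≤ P (j + 1)) {p : ℕ}
    (hp : p ∈ marks P m) : q ≤ p := by
  obtain ⟨j, hj, rfl⟩ := mem_image.1 hp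
  rw [mem_Icc] at hj
  simpa [hP0] using add_le_of_lt_of_step hstep (j₁ := 0) (by omega) (by omega)

theorem add_le_of_mem_marks (hPtop : P (m + 1) = n + 1) (hstep : ∀ j ≤ m, P j + q ≤ P (j + 1))
    {p : ℕ} (hp : p ∈ marks P m) : p + q ≤ n + 1 := by
  obtain ⟨j, hj, rfl⟩ := mem_image.1 hp
  rw [mem_Icc] at hj
  exact hPtop ▸ add_le_of_lt_of_step hstep (by omega) le_rfl

theorem add_le_of_mem_marks_of_lt (hstep : ∀ j ≤ m, P j + q ≤ P (j + 1)) {p₁ p₂ : ℕ}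
    (hp₁ : p₁ ∈ marks P m) (hp₂ : p₂ ∈ marks P m) (h : p₁ < p₂) : p₁ + q ≤ p₂ := by
  obtain ⟨j₁, hj₁, rfl⟩ := mem_image.1 hp₁
  obtain ⟨j₂, hj₂, rfl⟩ := mem_image.1 hp₂
  rw [mem_Icc] at hj₁ hj₂
  rcases lt_trichotomy j₁ j₂ with hlt | rfl | hgt
  · exact add_le_of_lt_of_step hstep hlt (by omega)
  · exact absurd h (lt_irrefl _)
  · have := add_le_of_lt_of_step hstep hgt (by omega); omega

theorem card_marks (hq : 0 < q) (hstep : ∀ j ≤ m, P j + q ≤ P (j + 1)) : #(marks P m) = m := by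
  rw [marks, card_image_of_injOn, Nat.card_Icc, Nat.add_sub_cancel]
  intro j₁ hj₁ j₂ hj₂ h
  simp only [coe_Icc, Set.mem_Icc] at hj₁ hj₂
  by_contra hne
  rcases Nat.lt_or_gt_of_ne hne with hlt | hgt
  · have := add_le_of_lt_of_step hstep hlt (by omega); omega
  · have := add_le_of_lt_of_step hstep hgt (by omega); omega

theorem exists_mem_marks_between (hP0 : P 0 = 0) (hPtop : P (m + 1) = n + 1)
    (hstep : ∀ j ≤ m, P (j + 1) ≤ P j + q + 1) {a b : ℕ} (hab : a + q < b) (hb : b ≤ n) :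
    ∃ p ∈ marks P m, a < p ∧ p ≤ b := by
  have hex : ∃ j, a < P j := ⟨m + 1, by omega⟩
  obtain ⟨j, hj_spec, hj_min⟩ : ∃ j, a < P j ∧ ∀ i < j, ¬ a < P i :=
    ⟨Nat.find hex, Nat.find_spec hex, fun i => Nat.find_min hex⟩
  have hj_le : j ≤ m + 1 := by
    by_contra h
    exact hj_min (m + 1) (by omega) (by omega)
  have hj_pos : 0 < j := Nat.pos_of_ne_zero fun h => by subst h; omega
  have hprev := hj_min (j - 1) (by omega)
  have hjump := hstep (j - 1) (by omega)
  rw [Nat.sub_add_cancel hj_pos] at hjump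
  have hj_ne : j ≠ m + 1 := fun h => by subst h; omega
  exact ⟨P j, mem_image_of_mem P (mem_Icc.2 ⟨hj_pos, by omega⟩), hj_spec, by omega⟩

theorem f_le_f_of_partialSums {n m q : ℕ} {x : ℝ} {P : ℕ → ℕ} {v u : Fin n → ℝ} (hx : 0 ≤ x)
    (hq : 0 < q) (hP0 : P 0 = 0) (hPtop : P (m + 1) = n + 1)
    (hstep_lo : ∀ j ≤ m, P j + q ≤ P (j + 1)) (hstep_hi : ∀ j ≤ m, P (j + 1) ≤ P j + q + 1)
    (hv : ∀ i, v i = if (i : ℕ) + 1 ∈ marks P m then x else 0) (hu : u ∈ Lambda n (m * x)) :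
    f n x v ≤ f n x u := by
  rw [← card_marks hq hstep_lo] at hu
  exact f_le_f_of_marks hx hq (fun p => le_of_mem_marks hP0 hstep_lo)
    (fun p => add_le_of_mem_marks hPtop hstep_lo)
    (fun p₁ hp₁ p₂ hp₂ => add_le_of_mem_marks_of_lt hstep_lo hp₁ hp₂)
    (fun a b => exists_mem_marks_between hP0 hPtop hstep_hi) hv hu

end Marks

theorem statement2_general (n m : ℕ) (x : ℝ) (hx : 0 < x)
    (vstar : Fin n → ℝ) (hv : IsEquidistant n m x vstar) :
    ∀ u ∈ Lambda n ((m : ℝ) * x), f n x vstar ≤ f n x u := by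
  intro u hu
  obtain ⟨Δ, hΔ_pos, hΔ_sum, hΔ_bal, hv⟩ := hv
  obtain ⟨k₀, hk₀, hk₀_min⟩ := exists_min_image (Icc 1 (m + 1)) Δ ⟨1, by simp⟩
  set P : ℕ → ℕ := fun j => ∑ k ∈ Icc 1 j, Δ k
  have hstep : ∀ j ≤ m, P j + Δ k₀ ≤ P (j + 1) ∧ P (j + 1) ≤ P j + Δ k₀ + 1 := fun j hj => by
    have hj : j + 1 ∈ Icc 1 (m + 1) := mem_Icc.2 ⟨by omega, by omega⟩
    have hP_succ : P (j + 1) = P j + Δ (j + 1) := sum_Icc_succ_top (by omega) Δ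
    have := hk₀_min _ hj
    have := hΔ_bal _ hj k₀ hk₀
    omega
  have hv_marks : ∀ i : Fin n, vstar i = if (i : ℕ) + 1 ∈ marks P m then x else 0 := by
    intro i
    have hmem : (i : ℕ) + 1 ∈ marks P m ↔ ∃ j, 1 ≤ j ∧ j ≤ m ∧ (i : ℕ) + 1 = P j := by
      simp only [marks, mem_image, mem_Icc, eq_comm, and_assoc]
    split_ifs with h
    exacts [(hv i).1 (hmem.1 h), (hv i).2 (mt hmem.2 h)]
  exact f_le_f_of_partialSums hx.le (hΔ_pos k₀ hk₀) (by simp [P]) hΔ_sum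
    (fun j hj => (hstep j hj).1) (fun j hj => (hstep j hj).2) hv_marks hu

/-- Any equidistant vector for mass `m·x` minimizes `f` over `Λ(m·x)`. -/
theorem statement2 (n m : ℕ) (hn : 1 ≤ n) (hm : m < n) (x : ℝ) (hx : 0 < x)
    (vstar : Fin n → ℝ) (hv : IsEquidistant n m x vstar) :
    ∀ u ∈ Lambda n ((m : ℝ) * x), f n x vstar ≤ f n x u :=
  statement2_general n m x hx vstar hv
end

section
/- Let n ≥ 1, x > 0, 0 ≤ m < n, and let v* ∈ ℝⁿ be any equidistant vector for mass mx, with Δ_y = ⌊(n+1)/(m+1)⌋. Then for every j with Δ_y < j ≤ n: f_j(v*) = 0; equivalently, every window of j consecutive coordinates of v* has sum at least x. -/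
open Finset

/-- `f_j v = Σ_{l=1}^{n+1−j} (x − Σ_{i=0}^{j−1} v_{l+i})⁺`, the sum of positive parts of
the deficits of all length-`j` windows of consecutive coordinates (`l` is 0-indexed here). -/
noncomputable def fj (n : ℕ) (x : ℝ) (j : ℕ) (v : Fin n → ℝ) : ℝ :=
  ∑ l ∈ Finset.range (n + 1 - j),
    max (x - ∑ i ∈ Finset.range j, if h : l + i < n then v ⟨l + i, h⟩ else 0) 0

/-- For an equidistant vector for mass `m·x` and `Δ_y < j ≤ n`, `f_j(v*) = 0`;
equivalently every window of `j` consecutive coordinates has sum at least `x`. -/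
theorem statement5 (n m : ℕ) (hn : 1 ≤ n) (hm : m < n) (x : ℝ) (hx : 0 < x)
    (vstar : Fin n → ℝ) (hv : IsEquidistant n m x vstar)
    (j : ℕ) (hj1 : (n + 1) / (m + 1) < j) (hj2 : j ≤ n) :
    fj n x j vstar = 0 ∧
    ∀ l ∈ Finset.range (n + 1 - j),
      x ≤ ∑ i ∈ Finset.range j, if h : l + i < n then vstar ⟨l + i, h⟩ else 0 := by
  classical
  obtain ⟨Δ, hpos, hsum, hclose, hval⟩ := hv
  have hm1 : 1 ≤ m := by
    by_contra h
    push_neg at h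
    interval_cases m
    simp [Nat.div_one] at hj1
    omega
  have hΔj : ∀ k ∈ Finset.Icc 1 (m+1), Δ k ≤ j := by
    obtain ⟨k0, hk0, hk0min⟩ := Finset.exists_min_image (Finset.Icc 1 (m+1)) Δ ⟨1, by simp⟩
    have hmul : (m+1) * Δ k0 ≤ n + 1 := by
      calc (m+1) * Δ k0 = ∑ _k ∈ Finset.Icc 1 (m+1), Δ k0 := by
            rw [Finset.sum_const, Nat.card_Icc]; simp [Nat.mul_comm]
        _ ≤ ∑ k ∈ Finset.Icc 1 (m+1), Δ k := Finset.sum_le_sum (fun k hk => hk0min k hk)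
        _ = n + 1 := hsum
    have hdiv : Δ k0 ≤ (n+1)/(m+1) :=
      (Nat.le_div_iff_mul_le (Nat.succ_pos m)).2 (by rw [Nat.mul_comm]; exact hmul)
    intro k hk
    have := hclose k hk k0 hk0
    omega
  set S : ℕ → ℕ := fun t => ∑ k ∈ Finset.Icc 1 t, Δ k with hS
  have hS0 : S 0 = 0 := by simp [hS]
  have hSsucc : ∀ t, S (t+1) = S t + Δ (t+1) := by
    intro t
    simp only [hS]
    rw [Finset.sum_Icc_succ_top (by omega)]
  have hSm1 : S (m+1) = n+1 := hsum
  have hvnn : ∀ i : Fin n, 0 ≤ vstar i := by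
    intro i
    by_cases h : ∃ jj, 1 ≤ jj ∧ jj ≤ m ∧ (i:ℕ)+1 = ∑ k ∈ Finset.Icc 1 jj, Δ k
    · rw [(hval i).1 h]; exact hx.le
    · rw [(hval i).2 h]
  have key : ∀ l ∈ Finset.range (n+1-j),
      x ≤ ∑ i ∈ Finset.range j, if h : l + i < n then vstar ⟨l+i,h⟩ else 0 := by
    intro l hl
    have hln : l + j ≤ n := by
      simp only [Finset.mem_range] at hl; omega
    have hSm : l < S m := by
      have h1 : S (m+1) = S m + Δ (m+1) := hSsucc m
      have hΔ : Δ (m+1) ≤ j := hΔj (m+1) (by simp)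
      omega
    have hne : ∃ t, l < S t := ⟨m, hSm⟩
    set t := Nat.find hne with ht
    have htspec : l < S t := Nat.find_spec hne
    have htm : t ≤ m := Nat.find_min' hne hSm
    have ht1 : 1 ≤ t := by
      rcases Nat.eq_zero_or_pos t with h0 | h
      · rw [h0, hS0] at htspec; omega
      · exact h
    have hprev : S (t-1) ≤ l := by
      have := Nat.find_min hne (show t - 1 < t by omega)
      omega
    have hSt_ub : S t ≤ l + j := by
      have heq : S t = S (t-1) + Δ t := by
        have := hSsucc (t-1)
        rwa [Nat.sub_add_cancel ht1] at this
      have hΔ : Δ t ≤ j := hΔj t (by simp; omega)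
      omega
    have hp : S t - 1 < n := by omega
    have hvx : vstar ⟨S t - 1, hp⟩ = x := by
      apply (hval _).1
      exact ⟨t, ht1, htm, by show S t - 1 + 1 = S t; omega⟩
    set i0 := S t - 1 - l with hi0
    have hi0lt : i0 < j := by omega
    have hterm : (if h : l + i0 < n then vstar ⟨l+i0,h⟩ else 0) = x := by
      rw [dif_pos (by omega : l + i0 < n)]
      rw [← hvx]
      congr 1
      ext
      simp only
      omega
    calc x = (if h : l + i0 < n then vstar ⟨l+i0,h⟩ else 0) := hterm.symm
      _ ≤ ∑ i ∈ Finset.range j, if h : l + i < n then vstar ⟨l+i,h⟩ else 0 := by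
          apply Finset.single_le_sum (f := fun i => if h : l + i < n then vstar ⟨l+i,h⟩ else 0) (fun i _ => ?_) (Finset.mem_range.2 hi0lt)
          show 0 ≤ (if h : l + i < n then vstar ⟨l+i,h⟩ else 0)
          split
          · exact hvnn _
          · exact le_refl 0
  refine ⟨?_, key⟩
  apply Finset.sum_eq_zero
  intro l hl
  have := key l hl
  rw [max_eq_right (by linarith)]
end

section
/- Let n ≥ 1, x > 0 and w ≥ 0, and let v ∈ Λ(w) be such that v_i ≤ x for every 1 ≤ i ≤ n and v_i + v_{i+1} ≥ x for every 1 ≤ i ≤ n−1. Then f(v) = n·x − w; in particular, by the general lower bound f ≥ n·x − w on Λ(w), such a v minimizes f over Λ(w). -/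
/-!
The diagonal terms `l = k` alone already give `f u ≥ Σ_l (x - u_l) = n·x - w` on `Λ(w)`.
For `v` as in the theorem these terms are exactly `x - v_l ≥ 0`, while every longer window
`[l, k]` contains the adjacent pair `v_l, v_{l+1}` of sum `≥ x`, so its term vanishes.
-/

open Finset

lemma sum_sub_eq_of_mem_Lambda {n : ℕ} {x w : ℝ} {u : Fin n → ℝ} (hu : u ∈ Lambda n w) :
    ∑ l : Fin n, (x - u l) = n * x - w := by
  rw [sum_sub_distrib, hu.2, sum_const, card_univ, Fintype.card_fin, nsmul_eq_mul]

lemma sum_sub_le_f (n : ℕ) (x : ℝ) (u : Fin n → ℝ) : ∑ l : Fin n, (x - u l) ≤ f n x u := by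
  refine sum_le_sum fun l _ => ?_
  calc x - u l ≤ if l ≤ l then max (x - ∑ i ∈ Icc l l, u i) 0 else 0 := by simp
    _ ≤ ∑ k : Fin n, if l ≤ k then max (x - ∑ i ∈ Icc l k, u i) 0 else 0 :=
        single_le_sum (f := fun k => if l ≤ k then max (x - ∑ i ∈ Icc l k, u i) 0 else 0)
          (fun k _ => by split_ifs <;> simp) (mem_univ l)

lemma le_sum_Icc_of_lt {n : ℕ} {x : ℝ} {v : Fin n → ℝ} (hnn : ∀ i, 0 ≤ v i)
    (hadj : ∀ i : Fin n, ∀ h : (i : ℕ) + 1 < n, x ≤ v i + v ⟨(i : ℕ) + 1, h⟩)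
    {l k : Fin n} (hlk : l < k) : x ≤ ∑ i ∈ Icc l k, v i := by
  have hl : (l : ℕ) + 1 < n := lt_of_le_of_lt hlk k.isLt
  set l' : Fin n := ⟨(l : ℕ) + 1, hl⟩
  have hpair : ({l, l'} : Finset (Fin n)) ⊆ Icc l k := by
    simp only [insert_subset_iff, singleton_subset_iff, mem_Icc, Fin.le_def]
    exact ⟨⟨le_rfl, hlk.le⟩, ⟨by simp [l'], hlk⟩⟩
  calc x ≤ v l + v l' := hadj l hl
    _ = ∑ i ∈ {l, l'}, v i := (sum_pair (by simp [l', Fin.ext_iff])).symm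
    _ ≤ ∑ i ∈ Icc l k, v i := sum_le_sum_of_subset_of_nonneg hpair fun i _ _ => hnn i

lemma f_eq_sum_sub {n : ℕ} {x : ℝ} {v : Fin n → ℝ} (hnn : ∀ i, 0 ≤ v i) (hle : ∀ i, v i ≤ x)
    (hadj : ∀ i : Fin n, ∀ h : (i : ℕ) + 1 < n, x ≤ v i + v ⟨(i : ℕ) + 1, h⟩) :
    f n x v = ∑ l : Fin n, (x - v l) := by
  refine sum_congr rfl fun l _ => ?_
  rw [sum_eq_single l]
  · simp [hle l]
  · intro k _ hkl
    split_ifs with hlk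
    · have hlong := le_sum_Icc_of_lt hnn hadj (lt_of_le_of_ne hlk hkl.symm)
      exact max_eq_right (sub_nonpos.mpr hlong)
    · rfl
  · simp

theorem statement7_general (n : ℕ) (x w : ℝ)
    (v : Fin n → ℝ) (hv : v ∈ Lambda n w)
    (hle : ∀ i, v i ≤ x)
    (hadj : ∀ i : Fin n, ∀ h : (i : ℕ) + 1 < n, x ≤ v i + v ⟨(i : ℕ) + 1, h⟩) :
    f n x v = (n : ℝ) * x - w ∧ ∀ u ∈ Lambda n w, f n x v ≤ f n x u := by
  have hfv : f n x v = n * x - w := by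
    rw [f_eq_sum_sub hv.1 hle hadj, sum_sub_eq_of_mem_Lambda hv]
  refine ⟨hfv, fun u hu => ?_⟩
  calc f n x v = ∑ l : Fin n, (x - u l) := by rw [hfv, sum_sub_eq_of_mem_Lambda hu]
    _ ≤ f n x u := sum_sub_le_f n x u

/-- If `v ∈ Λ(w)` has all coordinates `≤ x` and all adjacent pairs summing to `≥ x`,
then `f(v) = n·x − w`; in particular `v` minimizes `f` over `Λ(w)`. -/
theorem statement7 (n : ℕ) (hn : 1 ≤ n) (x w : ℝ) (hx : 0 < x) (hw : 0 ≤ w)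
    (v : Fin n → ℝ) (hv : v ∈ Lambda n w)
    (hle : ∀ i, v i ≤ x)
    (hadj : ∀ i : Fin n, ∀ h : (i : ℕ) + 1 < n, x ≤ v i + v ⟨(i : ℕ) + 1, h⟩) :
    f n x v = (n : ℝ) * x - w ∧ ∀ u ∈ Lambda n w, f n x v ≤ f n x u :=
  statement7_general n x w v hv hle hadj
end

section
/- Let n ≥ 1, x > 0 and w > 0. Then the infimum of f over Λ(w) = {v ∈ ℝⁿ : v_i ≥ 0 for all i, Σ_{i=1}^n v_i = w} equals the infimum of f over the ℓ¹-sphere {v ∈ ℝⁿ : ‖v‖₁ = w}; moreover, if v minimizes f over {v : ‖v‖₁ = w} then (|v_1|,…,|v_n|) ∈ Λ(w) minimizes f over Λ(w) with the same value. -/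
open Finset

/-! Each summand `(x - Σ_{i=l}^k v_i)⁺` decreases when `v` increases, and `v ≤ |v|`; since
`v ↦ |v|` maps the ℓ¹-sphere of radius `w` onto `Λ(w) ⊆ {‖v‖₁ = w}`, both infima coincide
and `|v|` is at least as good as `v`. -/

theorem f_antitone (n : ℕ) (x : ℝ) : Antitone (f n x) := by
  intro u v huv
  refine sum_le_sum fun l _ => sum_le_sum fun k _ => ?_
  split_ifs
  · exact max_le_max (sub_le_sub_left (sum_le_sum fun i _ => huv i) x) le_rfl
  · exact le_rfl

theorem f_abs_le (n : ℕ) (x : ℝ) (v : Fin n → ℝ) : f n x (fun i => |v i|) ≤ f n x v :=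
  f_antitone n x fun i => le_abs_self (v i)

theorem abs_mem_Lambda {n : ℕ} {w : ℝ} {v : Fin n → ℝ} (hv : ∑ i, |v i| = w) :
    (fun i => |v i|) ∈ Lambda n w :=
  ⟨fun i => abs_nonneg (v i), hv⟩

theorem Lambda_subset_l1Sphere (n : ℕ) (w : ℝ) :
    Lambda n w ⊆ {v : Fin n → ℝ | ∑ i, |v i| = w} := by
  rintro v ⟨hv_nonneg, hv_sum⟩
  simpa only [Set.mem_ofPred_eq, abs_of_nonneg (hv_nonneg _)] using hv_sum

theorem statement11_general (n : ℕ) (x w : ℝ) :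
    sInf (f n x '' Lambda n w) =
      sInf (f n x '' {v : Fin n → ℝ | ∑ i, |v i| = w}) ∧
    ∀ v : Fin n → ℝ, (∑ i, |v i| = w) →
      (∀ u : Fin n → ℝ, (∑ i, |u i| = w) → f n x v ≤ f n x u) →
      ((fun i => |v i|) ∈ Lambda n w ∧
        (∀ u ∈ Lambda n w, f n x (fun i => |v i|) ≤ f n x u) ∧
        f n x (fun i => |v i|) = f n x v) := by
  have hsub := Lambda_subset_l1Sphere n w
  refine ⟨csInf_eq_csInf_of_forall_exists_le ?_ ?_, fun v hv hmin => ?_⟩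
  · rintro _ ⟨u, hu, rfl⟩
    exact ⟨f n x u, ⟨u, hsub hu, rfl⟩, le_rfl⟩
  · rintro _ ⟨v, hv, rfl⟩
    exact ⟨_, ⟨_, abs_mem_Lambda hv, rfl⟩, f_abs_le n x v⟩
  · have habs := abs_mem_Lambda hv
    refine ⟨habs, fun u hu => (f_abs_le n x v).trans (hmin u (hsub hu)), ?_⟩
    exact (f_abs_le n x v).antisymm (hmin _ (hsub habs))

/-- The infimum of `f` over `Λ(w)` equals its infimum over the ℓ¹-sphere of radius `w`;
moreover a minimizer `v` over the ℓ¹-sphere yields the minimizer `|v| ∈ Λ(w)` of the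
same value. -/
theorem statement11 (n : ℕ) (hn : 1 ≤ n) (x w : ℝ) (hx : 0 < x) (hw : 0 < w) :
    sInf (f n x '' Lambda n w) =
      sInf (f n x '' {v : Fin n → ℝ | ∑ i, |v i| = w}) ∧
    ∀ v : Fin n → ℝ, (∑ i, |v i| = w) →
      (∀ u : Fin n → ℝ, (∑ i, |u i| = w) → f n x v ≤ f n x u) →
      ((fun i => |v i|) ∈ Lambda n w ∧
        (∀ u ∈ Lambda n w, f n x (fun i => |v i|) ≤ f n x u) ∧
        f n x (fun i => |v i|) = f n x v) :=
  statement11_general n x w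
end

section
/- Let n ≥ 1, x > 0, 0 ≤ m < n, and let y, z ≥ 0 satisfy y + z = x. Let v* = v_y + v_z ∈ ℝⁿ be any duo-equidistant vector in Γ(m, y, z), and let Δ_Y = ⌊(n+1)/(m+1)⌋. Then for every j with Δ_Y < j ≤ n: f_j(v*) = 0; equivalently, every window of j consecutive coordinates of v* has sum at least x. -/
open Finset

/-- A duo-equidistant vector `v = v_y + v_z ∈ Γ(m, y, z)`: `v_y` places mass `y` at the `m`
partial sums `Σ_{k=1}^{j} Δ_{y,k}` (`1 ≤ j ≤ m`) of positive integers
`Δ_{y,1},…,Δ_{y,m+1} ∈ {Δ_Y, Δ_Y+1}` (`Δ_Y = ⌊(n+1)/(m+1)⌋`) summing to `n+1`, and `v_z`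
places mass `z` at the `m+1` partial sums `Σ_{k=1}^{j} Δ_{z,k}` (`1 ≤ j ≤ m+1`) of positive
integers `Δ_{z,1},…,Δ_{z,m+2} ∈ {Δ_Z, Δ_Z+1}` (`Δ_Z = ⌊(n+1)/(m+2)⌋`) summing to `n+1`.
Indices of `v` are 1-based in this description (`Fin n` is 0-based, whence the `+ 1`). -/
def IsDuoEquidistant (n m : ℕ) (y z : ℝ) (v : Fin n → ℝ) : Prop :=
  ∃ vy vz : Fin n → ℝ, ∃ Δy Δz : ℕ → ℕ,
    v = vy + vz ∧
    (∀ k ∈ Finset.Icc 1 (m + 1), 0 < Δy k) ∧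
    (∀ k ∈ Finset.Icc 1 (m + 1),
      Δy k = (n + 1) / (m + 1) ∨ Δy k = (n + 1) / (m + 1) + 1) ∧
    (∑ k ∈ Finset.Icc 1 (m + 1), Δy k = n + 1) ∧
    (∀ k ∈ Finset.Icc 1 (m + 2), 0 < Δz k) ∧
    (∀ k ∈ Finset.Icc 1 (m + 2),
      Δz k = (n + 1) / (m + 2) ∨ Δz k = (n + 1) / (m + 2) + 1) ∧
    (∑ k ∈ Finset.Icc 1 (m + 2), Δz k = n + 1) ∧
    (∀ i : Fin n,
      ((∃ j, 1 ≤ j ∧ j ≤ m ∧ (i : ℕ) + 1 = ∑ k ∈ Finset.Icc 1 j, Δy k) → vy i = y) ∧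
      (¬ (∃ j, 1 ≤ j ∧ j ≤ m ∧ (i : ℕ) + 1 = ∑ k ∈ Finset.Icc 1 j, Δy k) → vy i = 0)) ∧
    (∀ i : Fin n,
      ((∃ j, 1 ≤ j ∧ j ≤ m + 1 ∧ (i : ℕ) + 1 = ∑ k ∈ Finset.Icc 1 j, Δz k) → vz i = z) ∧
      (¬ (∃ j, 1 ≤ j ∧ j ≤ m + 1 ∧ (i : ℕ) + 1 = ∑ k ∈ Finset.Icc 1 j, Δz k) → vz i = 0))

/-- `l` is a 0-based index; coordinates beyond `n` count as `0`. -/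
def windowSum {n : ℕ} (v : Fin n → ℝ) (l j : ℕ) : ℝ :=
  ∑ i ∈ range j, if h : l + i < n then v ⟨l + i, h⟩ else 0

lemma windowSum_add {n : ℕ} (v w : Fin n → ℝ) (l j : ℕ) :
    windowSum (v + w) l j = windowSum v l j + windowSum w l j := by
  simp only [windowSum, ← sum_add_distrib]
  refine sum_congr rfl fun i _ => ?_
  split_ifs <;> simp

lemma le_windowSum_of_nonneg {n : ℕ} {w : Fin n → ℝ} (hw : ∀ i, 0 ≤ w i) {l j : ℕ}
    (i : Fin n) (hli : l ≤ i) (hil : (i : ℕ) < l + j) :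
    w i ≤ windowSum w l j := by
  have hterm : w i = if h : l + (i - l) < n then w ⟨l + (i - l), h⟩ else 0 := by
    have hidx : l + (i - l) = i := by omega
    simp only [hidx, i.isLt, dif_pos]
  rw [hterm]
  exact single_le_sum (f := fun k => if h : l + k < n then w ⟨l + k, h⟩ else 0)
    (fun k _ => by split_ifs <;> simp [hw]) (mem_range.2 (by omega))

lemma fj_eq_zero_of_forall_le_windowSum {n j : ℕ} {x : ℝ} {v : Fin n → ℝ}
    (h : ∀ l ∈ range (n + 1 - j), x ≤ windowSum v l j) : fj n x j v = 0 :=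
  sum_eq_zero fun l hl => max_eq_right (sub_nonpos.2 (h l hl))

lemma exists_partial_sum_mem_window {M l j : ℕ} {Δ : ℕ → ℕ}
    (hΔ : ∀ k ∈ Icc 1 (M + 1), Δ k ≤ j) (hsum : l + j < ∑ k ∈ Icc 1 (M + 1), Δ k) :
    ∃ p, 1 ≤ p ∧ p ≤ M ∧ l < ∑ k ∈ Icc 1 p, Δ k ∧ ∑ k ∈ Icc 1 p, Δ k ≤ l + j := by
  classical
  have hex : ∃ p, l < ∑ k ∈ Icc 1 p, Δ k := ⟨M + 1, by omega⟩
  -- the first partial sum beyond `l` overshoots the previous one, which is `≤ l`, by at most `j`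
  set p := Nat.find hex
  have hp : l < ∑ k ∈ Icc 1 p, Δ k := Nat.find_spec hex
  have hp1 : 1 ≤ p := Nat.one_le_iff_ne_zero.2 fun h0 => by simp [h0] at hp
  have hpM : p ≤ M + 1 := Nat.find_le (by omega)
  have hprev : ¬ l < ∑ k ∈ Icc 1 (p - 1), Δ k := Nat.find_min hex (by omega)
  have hstep : ∑ k ∈ Icc 1 p, Δ k = ∑ k ∈ Icc 1 (p - 1), Δ k + Δ p := by
    conv_lhs => rw [show p = p - 1 + 1 by omega]
    rw [sum_Icc_succ_top (by omega), Nat.sub_add_cancel hp1]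
  have hle : ∑ k ∈ Icc 1 p, Δ k ≤ l + j := by
    have := hΔ p (mem_Icc.2 ⟨hp1, hpM⟩)
    omega
  refine ⟨p, hp1, ?_, hp, hle⟩
  by_contra hMp
  rw [show p = M + 1 by omega] at hle
  omega

lemma le_windowSum_of_marked {n M j l : ℕ} {c : ℝ} (hc : 0 ≤ c) {w : Fin n → ℝ} {Δ : ℕ → ℕ}
    (hw : ∀ i : Fin n,
      ((∃ p, 1 ≤ p ∧ p ≤ M ∧ (i : ℕ) + 1 = ∑ k ∈ Icc 1 p, Δ k) → w i = c) ∧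
      (¬ (∃ p, 1 ≤ p ∧ p ≤ M ∧ (i : ℕ) + 1 = ∑ k ∈ Icc 1 p, Δ k) → w i = 0))
    (hΔ : ∀ k ∈ Icc 1 (M + 1), Δ k ≤ j) (hsum : ∑ k ∈ Icc 1 (M + 1), Δ k = n + 1)
    (hlj : l + j ≤ n) :
    c ≤ windowSum w l j := by
  have hw0 : ∀ i, 0 ≤ w i := fun i => by
    by_cases hi : ∃ p, 1 ≤ p ∧ p ≤ M ∧ (i : ℕ) + 1 = ∑ k ∈ Icc 1 p, Δ k
    · rw [(hw i).1 hi]; exact hc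
    · rw [(hw i).2 hi]
  obtain ⟨p, hp1, hpM, hlS, hSl⟩ := exists_partial_sum_mem_window (l := l) hΔ (by omega)
  set S := ∑ k ∈ Icc 1 p, Δ k
  calc c = w ⟨S - 1, by omega⟩ := ((hw _).1 ⟨p, hp1, hpM, by simp only; omega⟩).symm
    _ ≤ windowSum w l j := le_windowSum_of_nonneg hw0 _ (by simp only; omega) (by simp only; omega)

theorem statement15_general (n m : ℕ) (x y z : ℝ)
    (hy : 0 ≤ y) (hz : 0 ≤ z) (hyz : y + z = x)
    (vstar : Fin n → ℝ) (hv : IsDuoEquidistant n m y z vstar)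
    (j : ℕ) (hj1 : (n + 1) / (m + 1) < j) (hj2 : j ≤ n) :
    fj n x j vstar = 0 ∧
    ∀ l ∈ Finset.range (n + 1 - j),
      x ≤ ∑ i ∈ Finset.range j, if h : l + i < n then vstar ⟨l + i, h⟩ else 0 := by
  obtain ⟨vy, vz, Δy, Δz, rfl, -, hΔy, hΔysum, -, hΔz, hΔzsum, hvy, hvz⟩ := hv
  have hZY : (n + 1) / (m + 2) ≤ (n + 1) / (m + 1) := Nat.div_le_div_left (by omega) (by omega)
  have hwindow : ∀ l ∈ range (n + 1 - j), x ≤ windowSum (vy + vz) l j := by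
    intro l hl
    have hlj : l + j ≤ n := by rw [mem_range] at hl; omega
    rw [windowSum_add, ← hyz]
    exact add_le_add
      (le_windowSum_of_marked hy hvy (fun k hk => by rcases hΔy k hk with h | h <;> omega)
        hΔysum hlj)
      (le_windowSum_of_marked hz hvz (fun k hk => by rcases hΔz k hk with h | h <;> omega)
        hΔzsum hlj)
  exact ⟨fj_eq_zero_of_forall_le_windowSum hwindow, hwindow⟩

/-- For a duo-equidistant vector in `Γ(m, y, z)` with `y + z = x` and `Δ_Y < j ≤ n`,
`f_j(v*) = 0`; equivalently every window of `j` consecutive coordinates has sum `≥ x`. -/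
theorem statement15 (n m : ℕ) (hn : 1 ≤ n) (hm : m < n) (x y z : ℝ) (hx : 0 < x)
    (hy : 0 ≤ y) (hz : 0 ≤ z) (hyz : y + z = x)
    (vstar : Fin n → ℝ) (hv : IsDuoEquidistant n m y z vstar)
    (j : ℕ) (hj1 : (n + 1) / (m + 1) < j) (hj2 : j ≤ n) :
    fj n x j vstar = 0 ∧
    ∀ l ∈ Finset.range (n + 1 - j),
      x ≤ ∑ i ∈ Finset.range j, if h : l + i < n then vstar ⟨l + i, h⟩ else 0 :=
  statement15_general n m x y z hy hz hyz vstar hv j hj1 hj2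
end
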